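/- Let d ≥ 1, α, β > 0, N ≥ 1, and for j = 1,…,N let c_j > 0 and let γ_j : [0,1] → ℝ^d be AC² with derivative g_j; set a_j := ((β/2) ∫₀¹ |g_j(t)|² dt + α)⁻¹. Let ρ be the finite positive Borel measure on ℝ × ℝ^d given by ρ := Σ_{j=1}^N c_j a_j (T_j)_# λ, where λ is Lebesgue measure on [0,1] and T_j(t) := (t, γ_j(t)). Then ρ(ℝ × ℝ^d) = Σ_j c_j a_j, and for every Borel map v : ℝ × ℝ^d → ℝ^d satisfying, for each j, v(t, γ_j(t)) = g_j(t) for a.e. t ∈ (0,1), one has (β/2) ∫_{ℝ × ℝ^d} |v|² dρ + α · ρ(ℝ × ℝ^d) = Σ_{j=1}^N c_j. (Lemma 2.2: the optimal-transport regularizer J_{α,β} takes the value Σ_j c_j on the conic combination Σ_j c_j μ_{γ_j} of atoms; in particular J_{α,β}(μ_{γ_j}) = 1.) -/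

import Mathlib

open MeasureTheory Set
open scoped ENNReal

/-! The pushforward of Lebesgue measure on `[0,1]` along `t ↦ (t, γ(t))` is a probability
measure, and for a velocity field compatible with `γ` its kinetic energy is `∫₀¹ |g|²`.
Mass and energy are additive in the weights, so the atom of weight `c_j a_j` contributes
`c_j a_j ((β/2) ∫₀¹ |g_j|² + α) = c_j`, which is what the normalisation `a_j` is chosen for. -/

/-- A curve `γ : [0,1] → ℝ^d` is AC² with derivative `g` if `g ∈ L²((0,1); ℝ^d)` and
`γ(t) = γ(0) + ∫₀ᵗ g(s) ds` for all `t ∈ [0,1]`. -/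
def IsAC2 {d : ℕ} (γ g : ℝ → EuclideanSpace ℝ (Fin d)) : Prop :=
  MemLp g 2 (volume.restrict (Ioc (0:ℝ) 1)) ∧
  ∀ t ∈ Icc (0:ℝ) 1, γ t = γ 0 + ∫ s in (0:ℝ)..t, g s

instance isProbabilityMeasure_volume_restrict_Icc_zero_one :
    IsProbabilityMeasure (volume.restrict (Icc (0:ℝ) 1)) :=
  ⟨by simp [Real.volume_Icc]⟩

section WeightedPushforward

variable {ι α β E : Type*} [MeasurableSpace α] [MeasurableSpace β]
  [NormedAddCommGroup E] [NormedSpace ℝ E]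
  (s : Finset ι) {μ : Measure α} {w : ι → ℝ≥0∞} {f : ι → α → β}

lemma sum_smul_map_apply_univ [IsProbabilityMeasure μ] (hf : ∀ j ∈ s, AEMeasurable (f j) μ) :
    (∑ j ∈ s, w j • μ.map (f j)) univ = ∑ j ∈ s, w j := by
  rw [Measure.finsetSum_apply]
  refine Finset.sum_congr rfl fun j hj => ?_
  have := Measure.isProbabilityMeasure_map (hf j hj)
  rw [Measure.smul_apply, measure_univ, smul_eq_mul, mul_one]

lemma integral_sum_smul_map {φ : β → E} (hφ : StronglyMeasurable φ) (hw : ∀ j ∈ s, w j ≠ ∞)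
    (hf : ∀ j ∈ s, AEMeasurable (f j) μ)
    (hint : ∀ j ∈ s, Integrable (fun x => φ (f j x)) μ) :
    ∫ y, φ y ∂(∑ j ∈ s, w j • μ.map (f j)) = ∑ j ∈ s, (w j).toReal • ∫ x, φ (f j x) ∂μ := by
  have hint_map : ∀ j ∈ s, Integrable φ (μ.map (f j)) := fun j hj =>
    (integrable_map_measure hφ.aestronglyMeasurable (hf j hj)).2 (hint j hj)
  rw [integral_finsetSum_measure fun j hj => (hint_map j hj).smul_measure (hw j hj)]
  refine Finset.sum_congr rfl fun j hj => ?_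
  rw [integral_smul_measure, integral_map (hf j hj) hφ.aestronglyMeasurable]

end WeightedPushforward

namespace IsAC2

variable {d : ℕ} {γ g : ℝ → EuclideanSpace ℝ (Fin d)}

lemma integrableOn (h : IsAC2 γ g) : IntegrableOn g (Icc 0 1) := by
  rw [IntegrableOn, ← restrict_Ioc_eq_restrict_Icc]
  exact h.1.integrable (by norm_num)

lemma integrableOn_norm_sq (h : IsAC2 γ g) : IntegrableOn (fun t => ‖g t‖ ^ 2) (Icc 0 1) := by
  rw [IntegrableOn, ← restrict_Ioc_eq_restrict_Icc]
  exact h.1.norm.integrable_sq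

lemma continuousOn (h : IsAC2 γ g) : ContinuousOn γ (Icc 0 1) := by
  have hprim : ContinuousOn (fun t => ∫ s in (0:ℝ)..t, g s) (uIcc 0 1) :=
    intervalIntegral.continuousOn_primitive_interval <| by
      rw [uIcc_of_le zero_le_one]; exact h.integrableOn
  rw [uIcc_of_le zero_le_one] at hprim
  exact (continuousOn_const.add hprim).congr h.2

lemma aemeasurable_graph (h : IsAC2 γ g) :
    AEMeasurable (fun t => (t, γ t)) (volume.restrict (Icc (0:ℝ) 1)) :=
  aemeasurable_id.prodMk (h.continuousOn.aemeasurable measurableSet_Icc)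

end IsAC2

theorem regularizer_linear_on_atoms_general
    {d N : ℕ}
    (α β : ℝ) (hα : 0 < α) (hβ : 0 < β)
    (c : Fin N → ℝ) (hc : ∀ j, 0 < c j)
    (γ g : Fin N → ℝ → EuclideanSpace ℝ (Fin d))
    (hγ : ∀ j, IsAC2 (γ j) (g j))
    (a : Fin N → ℝ)
    (ha : ∀ j, a j = ((β / 2) * (∫ t in (0:ℝ)..1, ‖g j t‖ ^ 2) + α)⁻¹)
    (ρ : Measure (ℝ × EuclideanSpace ℝ (Fin d)))
    (hρ : ρ = ∑ j, ENNReal.ofReal (c j * a j) •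
        Measure.map (fun t => (t, γ j t)) (volume.restrict (Icc (0:ℝ) 1))) :
    ρ univ = ENNReal.ofReal (∑ j, c j * a j) ∧
    ∀ v : ℝ × EuclideanSpace ℝ (Fin d) → EuclideanSpace ℝ (Fin d),
      Measurable v →
      (∀ j, ∀ᵐ t ∂(volume.restrict (Ioo (0:ℝ) 1)), v (t, γ j t) = g j t) →
      (β / 2) * (∫ p, ‖v p‖ ^ 2 ∂ρ) + α * (ρ univ).toReal = ∑ j, c j := by
  set E : Fin N → ℝ := fun j => ∫ t in Icc 0 1, ‖g j t‖ ^ 2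
  have hcost_pos : ∀ j, 0 < (β / 2) * E j + α := fun j => by
    have : 0 ≤ E j := setIntegral_nonneg measurableSet_Icc fun t _ => sq_nonneg _
    positivity
  have ha_eq : ∀ j, a j = ((β / 2) * E j + α)⁻¹ := fun j => by
    rw [ha j, intervalIntegral.integral_of_le zero_le_one, ← integral_Icc_eq_integral_Ioc]
  have hca : ∀ j, 0 ≤ c j * a j := fun j =>
    mul_nonneg (hc j).le (ha_eq j ▸ (inv_pos.2 (hcost_pos j)).le)
  have hmass : ρ univ = ENNReal.ofReal (∑ j, c j * a j) := by
    rw [hρ, sum_smul_map_apply_univ _ fun j _ => (hγ j).aemeasurable_graph,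
      ENNReal.ofReal_sum_of_nonneg fun j _ => hca j]
  refine ⟨hmass, fun v hv hvg => ?_⟩
  have henergy : ∀ j, (fun t => ‖v (t, γ j t)‖ ^ 2) =ᵐ[volume.restrict (Icc (0:ℝ) 1)]
      fun t => ‖g j t‖ ^ 2 := fun j => by
    rw [← restrict_Ioo_eq_restrict_Icc]
    filter_upwards [hvg j] with t ht using by rw [ht]
  rw [hmass, hρ, integral_sum_smul_map _ (hv.norm.pow_const 2).stronglyMeasurable
      (fun _ _ => ENNReal.ofReal_ne_top) (fun j _ => (hγ j).aemeasurable_graph)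
      (fun j _ => ((hγ j).integrableOn_norm_sq).congr (henergy j).symm),
    ENNReal.toReal_ofReal (Finset.sum_nonneg fun j _ => hca j),
    Finset.mul_sum, Finset.mul_sum, ← Finset.sum_add_distrib]
  refine Finset.sum_congr rfl fun j _ => ?_
  rw [ENNReal.toReal_ofReal (hca j), integral_congr_ae (henergy j), smul_eq_mul]
  calc (β / 2) * (c j * a j * E j) + α * (c j * a j)
      = c j * (a j * ((β / 2) * E j + α)) := by ring
    _ = c j := by rw [ha_eq j, inv_mul_cancel₀ (hcost_pos j).ne', mul_one]

/-- Lemma 2.2: the optimal-transport regularizer `J_{α,β}` takes the value `Σ_j c_j` on the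
conic combination `Σ_j c_j μ_{γ_j}` of atoms.  Here `ρ = Σ_j c_j a_j (t ↦ (t,γ_j(t)))_# λ`
has total mass `Σ_j c_j a_j`, and for every Borel velocity field `v` compatible with all the
curves, `(β/2) ∫ |v|² dρ + α ρ(ℝ×ℝ^d) = Σ_j c_j`. -/
theorem regularizer_linear_on_atoms
    {d N : ℕ} (hd : 1 ≤ d) (hN : 1 ≤ N)
    (α β : ℝ) (hα : 0 < α) (hβ : 0 < β)
    (c : Fin N → ℝ) (hc : ∀ j, 0 < c j)
    (γ g : Fin N → ℝ → EuclideanSpace ℝ (Fin d))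
    (hγ : ∀ j, IsAC2 (γ j) (g j))
    (a : Fin N → ℝ)
    (ha : ∀ j, a j = ((β / 2) * (∫ t in (0:ℝ)..1, ‖g j t‖ ^ 2) + α)⁻¹)
    (ρ : Measure (ℝ × EuclideanSpace ℝ (Fin d)))
    (hρ : ρ = ∑ j, ENNReal.ofReal (c j * a j) •
        Measure.map (fun t => (t, γ j t)) (volume.restrict (Icc (0:ℝ) 1))) :
    ρ univ = ENNReal.ofReal (∑ j, c j * a j) ∧
    ∀ v : ℝ × EuclideanSpace ℝ (Fin d) → EuclideanSpace ℝ (Fin d),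
      Measurable v →
      (∀ j, ∀ᵐ t ∂(volume.restrict (Ioo (0:ℝ) 1)), v (t, γ j t) = g j t) →
      (β / 2) * (∫ p, ‖v p‖ ^ 2 ∂ρ) + α * (ρ univ).toReal = ∑ j, c j :=
  regularizer_linear_on_atoms_general α β hα hβ c hc γ g hγ a ha ρ hρ
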